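/- Let S be a discrete semigroup, E a complex Banach space, and π a JdLG-admissible representation of S on E, with Q the projection of E onto E_r whose kernel is E_aws. If p is an idempotent ultrafilter lying in the topological closure of K(βS), the smallest two-sided ideal of βS, then π_p := p-lim_s π_s (limit in the weak operator topology) equals Q. -/

import Mathlib

open Filter Topology Set MeasureTheory BoundedContinuousFunction

noncomputable section

namespace JdLG

section Operators

variable (E : Type*) [NormedAddCommGroup E] [NormedSpace ℂ E]

/-- The closure of a set of bounded operators in the weak operator topology. -/
def wotClosure (T : Set (E →L[ℂ] E)) : Set (E →L[ℂ] E) :=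
  ((ContinuousLinearMapWOT.ofCLM : (E →L[ℂ] E) → (E →WOT[ℂ] E))) ⁻¹' closure (((ContinuousLinearMapWOT.ofCLM : (E →L[ℂ] E) → (E →WOT[ℂ] E))) '' T)

/-- A set of bounded operators is relatively weakly compact if it is relatively compact in
the weak operator topology. -/
def RelWeaklyCompact (T : Set (E →L[ℂ] E)) : Prop :=
  IsCompact (closure (((ContinuousLinearMapWOT.ofCLM : (E →L[ℂ] E) → (E →WOT[ℂ] E))) '' T))

/-- The reversible part `E_r` of `E` for a set of operators `T`, defined through the weak
operator closure `𝒮` of `T`. -/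
def rev (T : Set (E →L[ℂ] E)) : Set E :=
  {ξ | ∀ u ∈ wotClosure E T, ∃ v ∈ wotClosure E T, v (u ξ) = ξ}

/-- The almost weakly stable part `E_aws` of `E` for a set of operators `T`. -/
def aws (T : Set (E →L[ℂ] E)) : Set E :=
  {ξ | ∃ u ∈ wotClosure E T, u ξ = 0}

/-- A semigroup of operators is JdLG-admissible if it is relatively weakly compact and
`E` decomposes as the direct sum `E = E_r ⊕ E_aws`: every vector is uniquely the sum of a
reversible vector and an almost weakly stable vector. -/
def Admissible (T : Set (E →L[ℂ] E)) : Prop :=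
  RelWeaklyCompact E T ∧
    ∀ ξ : E, ∃! q : E × E, q.1 ∈ rev E T ∧ q.2 ∈ aws E T ∧ q.1 + q.2 = ξ

variable {S : Type*}

/-- A representation of a (semitopological) semigroup `S` on `E`: a homomorphism into the
bounded operators on `E` which is continuous into the weak operator topology. -/
def IsRepresentation [Mul S] [TopologicalSpace S] (π : S → E →L[ℂ] E) : Prop :=
  (∀ s t : S, π (s * t) = (π s).comp (π t)) ∧
    Continuous fun s => (ContinuousLinearMapWOT.ofCLM : (E →L[ℂ] E) → (E →WOT[ℂ] E)) (π s)

end Operators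

section Means

variable (S : Type*)

/-- A function is bounded in the sup norm. -/
def IsBddFun (f : S → ℂ) : Prop := ∃ C : ℝ, ∀ t, ‖f t‖ ≤ C

/-- A bounded continuous function is weakly almost periodic if its set of right translates is
relatively compact in the weak topology of `C_b(S)`. Here we state this for a plain function
which coincides with some bounded continuous function. -/
def IsWAP [Mul S] [TopologicalSpace S] (f : S → ℂ) : Prop :=
  (∃ F : BoundedContinuousFunction S ℂ, ∀ t, F t = f t) ∧
    IsCompact (closure ((toWeakSpace ℂ (BoundedContinuousFunction S ℂ)) ''
      {G : BoundedContinuousFunction S ℂ | ∃ s : S, ∀ t, G t = f (t * s)}))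

/-- A mean on the class `P` of (bounded) functions on `S`: a positive linear functional of
norm one. (The value of `toFun` outside `P` is irrelevant.) -/
structure MeanOn (P : (S → ℂ) → Prop) where
  toFun : (S → ℂ) → ℂ
  map_add : ∀ f g, P f → P g → toFun (f + g) = toFun f + toFun g
  map_smul : ∀ (c : ℂ) (f), P f → toFun (c • f) = c * toFun f
  positive : ∀ f, P f → (∀ t, 0 ≤ (f t).re ∧ (f t).im = 0) →
    0 ≤ (toFun f).re ∧ (toFun f).im = 0
  map_one : toFun (fun _ => 1) = 1
  norm_le : ∀ (f) (C : ℝ), P f → (∀ t, ‖f t‖ ≤ C) → ‖toFun f‖ ≤ C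

variable {S}
variable {P : (S → ℂ) → Prop}

/-- A mean is left-invariant if it is invariant under all left translations of the argument. -/
def MeanOn.LeftInvariant [Mul S] (m : MeanOn S P) : Prop :=
  ∀ (s : S) (f), P f → m.toFun (fun t => f (s * t)) = m.toFun f

/-- A mean is right-invariant if it is invariant under all right translations of the
argument. -/
def MeanOn.RightInvariant [Mul S] (m : MeanOn S P) : Prop :=
  ∀ (s : S) (f), P f → m.toFun (fun t => f (t * s)) = m.toFun f

/-- A bi-invariant mean is both left- and right-invariant. -/
def MeanOn.BiInvariant [Mul S] (m : MeanOn S P) : Prop :=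
  m.LeftInvariant ∧ m.RightInvariant

end Means

attribute [local instance] Ultrafilter.mul Ultrafilter.semigroup

section Ultra

variable {S : Type*}

/-- The upper Banach density of a subset of a discrete semigroup, computed through the
left-invariant means on `ℓ^∞(S)`. -/
def dStarDiscrete [Mul S] (A : Set S) : ℝ :=
  sSup {x : ℝ | ∃ m : MeanOn S (IsBddFun S), m.LeftInvariant ∧
    (m.toFun (A.indicator fun _ => 1)).re = x}

/-- `Δ*(S)` is the set of ultrafilters all of whose members have positive upper Banach
density. -/
def DeltaStar (S : Type*) [Mul S] : Set (Ultrafilter S) :=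
  {p | ∀ A ∈ p, 0 < dStarDiscrete A}

/-- A nonempty subset of `βS` which is a two-sided ideal for the extended multiplication. -/
def IsTwoSidedIdeal [Semigroup S] (K : Set (Ultrafilter S)) : Prop :=
  K.Nonempty ∧ ∀ p ∈ K, ∀ q : Ultrafilter S, p * q ∈ K ∧ q * p ∈ K

end Ultra

end JdLG

attribute [local instance] Ultrafilter.mul Ultrafilter.semigroup

/-! ### Auxiliary material for the proof -/

section WOTSemigroupAux

variable {E : Type*} [NormedAddCommGroup E] [NormedSpace ℂ E]

namespace JdLGProof

/-- The inclusion into the WOT type copy, as a linear equivalence. -/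
def toWOTL (𝕜 : Type*) (E F : Type*) [RCLike 𝕜] [NormedAddCommGroup E] [NormedSpace 𝕜 E]
    [NormedAddCommGroup F] [NormedSpace 𝕜 F] : (E →L[𝕜] F) ≃ₗ[𝕜] (E →WOT[𝕜] F) where
  toFun := ContinuousLinearMapWOT.ofCLM
  invFun := ContinuousLinearMapWOT.toCLM
  map_add' _ _ := rfl
  map_smul' _ _ := rfl
  left_inv _ := rfl
  right_inv _ := rfl

lemma toWOTL_apply (A : E →L[ℂ] E) (x : E) : toWOTL ℂ E E A x = A x := rfl

/-- Composition as a multiplication on the WOT type copy. -/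
def wotMul (A B : E →WOT[ℂ] E) : E →WOT[ℂ] E :=
  toWOTL ℂ E E
    (((toWOTL ℂ E E).symm A).comp ((toWOTL ℂ E E).symm B))

instance : Semigroup (E →WOT[ℂ] E) where
  mul := wotMul
  mul_assoc A B C := by
    show wotMul (wotMul A B) C = wotMul A (wotMul B C)
    unfold wotMul
    rw [LinearEquiv.symm_apply_apply, LinearEquiv.symm_apply_apply,
      ContinuousLinearMap.comp_assoc]

lemma wot_mul_def (A B : E →WOT[ℂ] E) :
    A * B = toWOTL ℂ E E
      (((toWOTL ℂ E E).symm A).comp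
        ((toWOTL ℂ E E).symm B)) := rfl

lemma wot_coe (A : E →WOT[ℂ] E) (x : E) :
    A x = ((toWOTL ℂ E E).symm A) x := rfl

lemma wot_mul_apply (A B : E →WOT[ℂ] E) (x : E) : (A * B) x = A (B x) := by
  rw [wot_mul_def, toWOTL_apply]
  rfl

lemma continuous_wot_mul_left (r : E →WOT[ℂ] E) :
    Continuous (fun A : E →WOT[ℂ] E => A * r) := by
  apply ContinuousLinearMapWOT.continuous_of_dual_apply_continuous
  intro x y
  simp only [wot_mul_apply]
  exact ContinuousLinearMapWOT.continuous_dual_apply (r x) y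

lemma continuous_wot_mul_right (r : E →WOT[ℂ] E) :
    Continuous (fun A : E →WOT[ℂ] E => r * A) := by
  apply ContinuousLinearMapWOT.continuous_of_dual_apply_continuous
  intro x y
  have h := ContinuousLinearMapWOT.continuous_dual_apply (𝕜₁ := ℂ) (σ := RingHom.id ℂ) (F := E) x
    (y.comp ((toWOTL ℂ E E).symm r))
  exact h

end JdLGProof

end WOTSemigroupAux

section MinIdealAux

namespace JdLGProof

variable {M : Type*} [Semigroup M] [TopologicalSpace M] [T2Space M]

/-- `L` is a minimal (nonempty closed) left ideal of the compact subsemigroup `T`. -/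
def IsMinLI (T L : Set M) : Prop :=
  L ⊆ T ∧ L.Nonempty ∧ IsClosed L ∧ (∀ a ∈ T, ∀ x ∈ L, a * x ∈ L) ∧
    ∀ L' ⊆ L, L'.Nonempty → IsClosed L' → (∀ a ∈ T, ∀ x ∈ L', a * x ∈ L') → L' = L

lemma exists_isMinLI (hρ : ∀ r : M, Continuous (· * r)) (T : Set M) (hT : IsCompact T)
    (hTmul : ∀ a ∈ T, ∀ b ∈ T, a * b ∈ T) (hTne : T.Nonempty) : ∃ L, IsMinLI T L := by
  set S : Set (Set M) :=
    {L | L ⊆ T ∧ L.Nonempty ∧ IsClosed L ∧ ∀ a ∈ T, ∀ x ∈ L, a * x ∈ L} with hS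
  have hTS : T ∈ S := ⟨subset_rfl, hTne, hT.isClosed, hTmul⟩
  have hzorn : ∀ c ⊆ S, IsChain (· ⊆ ·) c → c.Nonempty → ∃ lb ∈ S, ∀ s ∈ c, lb ⊆ s := by
    intro c hcS hchain hcne
    refine ⟨⋂₀ c, ⟨?_, ?_, ?_, ?_⟩, fun s hs => Set.sInter_subset_of_mem hs⟩
    · obtain ⟨t, ht⟩ := hcne
      exact (Set.sInter_subset_of_mem ht).trans (hcS ht).1
    · haveI : Nonempty c := hcne.coe_sort
      exact IsCompact.nonempty_sInter_of_directed_nonempty_isCompact_isClosed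
        (IsChain.directedOn hchain.symm)
        (fun U hU => (hcS hU).2.1)
        (fun U hU => hT.of_isClosed_subset (hcS hU).2.2.1 (hcS hU).1)
        (fun U hU => (hcS hU).2.2.1)
    · exact isClosed_sInter fun t ht => (hcS ht).2.2.1
    · intro a ha x hx
      rw [Set.mem_sInter] at hx ⊢
      exact fun t ht => (hcS ht).2.2.2 a ha x (hx t ht)
  obtain ⟨L, -, hmin⟩ := zorn_superset_nonempty S hzorn T hTS
  refine ⟨L, hmin.prop.1, hmin.prop.2.1, hmin.prop.2.2.1, hmin.prop.2.2.2,
    fun L' hsub hne hcl hid => ?_⟩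
  exact subset_antisymm hsub
    (hmin.2 ⟨hsub.trans hmin.prop.1, hne, hcl, hid⟩ hsub)

lemma minLI_eq (hρ : ∀ r : M, Continuous (· * r)) (T : Set M) (hT : IsCompact T)
    (hTmul : ∀ a ∈ T, ∀ b ∈ T, a * b ∈ T) {L : Set M} (hL : IsMinLI T L) {x : M} (hx : x ∈ L) :
    (· * x) '' T ∪ {x} = L := by
  apply hL.2.2.2.2
  · rintro z (⟨a, haT, rfl⟩ | rfl)
    · exact hL.2.2.2.1 a haT x hx
    · exact hx
  · exact ⟨x, Or.inr rfl⟩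
  · exact ((hT.image (hρ x)).isClosed).union isClosed_singleton
  · rintro a ha z (⟨b, hb, rfl⟩ | rfl)
    · exact Or.inl ⟨a * b, hTmul a ha b hb, mul_assoc a b x⟩
    · exact Or.inl ⟨a, ha, rfl⟩

lemma minLI_exists_fix (hρ : ∀ r : M, Continuous (· * r)) (T : Set M) (hT : IsCompact T)
    {L : Set M} (hL : IsMinLI T L) {x : M} (hx : x ∈ L) :
    ∃ a ∈ L, a * x = x := by
  have himg : (· * x) '' L = L := by
    apply hL.2.2.2.2
    · rintro z ⟨a, haL, rfl⟩
      exact hL.2.2.2.1 a (hL.1 haL) x hx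
    · exact ⟨_, ⟨_, hx, rfl⟩⟩
    · exact ((hT.of_isClosed_subset hL.2.2.1 hL.1).image (hρ x)).isClosed
    · rintro a ha z ⟨b, hbL, rfl⟩
      exact ⟨a * b, hL.2.2.2.1 a ha b hbL, mul_assoc a b x⟩
  conv at hx => rw [← himg]
  obtain ⟨a, haL, ha⟩ := hx
  exact ⟨a, haL, ha⟩

lemma minLI_mul (hρ : ∀ r : M, Continuous (· * r)) (T : Set M) (hT : IsCompact T)
    (hTmul : ∀ a ∈ T, ∀ b ∈ T, a * b ∈ T) {L : Set M} (hL : IsMinLI T L) {b : M} (hb : b ∈ T) :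
    IsMinLI T ((· * b) '' L) := by
  refine ⟨?_, ?_, ?_, ?_, ?_⟩
  · rintro z ⟨a, haL, rfl⟩
    exact hTmul a (hL.1 haL) b hb
  · exact ⟨_, ⟨_, hL.2.1.choose_spec, rfl⟩⟩
  · exact ((hT.of_isClosed_subset hL.2.2.1 hL.1).image (hρ b)).isClosed
  · rintro a ha z ⟨c, hcL, rfl⟩
    exact ⟨a * c, hL.2.2.2.1 a ha c hcL, mul_assoc a c b⟩
  · intro L' hsub hne hcl hid
    have hP : L ∩ (· * b) ⁻¹' L' = L := by
      apply hL.2.2.2.2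
      · exact Set.inter_subset_left
      · obtain ⟨z, hz⟩ := hne
        obtain ⟨c, hcL, rfl⟩ := hsub hz
        exact ⟨c, hcL, hz⟩
      · exact hL.2.2.1.inter (hcl.preimage (hρ b))
      · rintro a ha x ⟨hxL, hxb⟩
        refine ⟨hL.2.2.2.1 a ha x hxL, ?_⟩
        show a * x * b ∈ L'
        rw [mul_assoc]
        exact hid a ha _ hxb
    apply subset_antisymm hsub
    rintro z ⟨c, hcL, rfl⟩
    have hc : c ∈ L ∩ (· * b) ⁻¹' L' := hP.symm ▸ hcL
    exact hc.2

lemma minLI_exists_idem (hρ : ∀ r : M, Continuous (· * r)) (T : Set M) (hT : IsCompact T)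
    {L : Set M} (hL : IsMinLI T L) : ∃ e ∈ L, e * e = e :=
  exists_idempotent_in_compact_subsemigroup hρ L hL.2.1
    (hT.of_isClosed_subset hL.2.2.1 hL.1)
    (fun x hx y hy => hL.2.2.2.1 x (hL.1 hx) y hy)

lemma minLI_idem_rev (hρ : ∀ r : M, Continuous (· * r)) (T : Set M) (hT : IsCompact T)
    (hTmul : ∀ a ∈ T, ∀ b ∈ T, a * b ∈ T) {L : Set M} (hL : IsMinLI T L) {e : M} (he : e ∈ L)
    (hee : e * e = e) : ∀ u ∈ T, ∃ v ∈ T, v * (u * e) = e := by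
  intro u hu
  have hue : u * e ∈ L := hL.2.2.2.1 u hu e he
  have hdesc := minLI_eq hρ T hT hTmul hL hue
  have he' : e ∈ (· * (u * e)) '' T ∪ {u * e} := by rw [hdesc]; exact he
  rcases he' with ⟨v, hvT, hv⟩ | he'
  · exact ⟨v, hvT, hv⟩
  · have h1 : e = u * e := he'
    exact ⟨e, hL.1 he, by rw [← h1, hee]⟩

lemma minLI_exists_idem_fix (hρ : ∀ r : M, Continuous (· * r)) (T : Set M) (hT : IsCompact T)
    (hTmul : ∀ a ∈ T, ∀ b ∈ T, a * b ∈ T) {L : Set M} (hL : IsMinLI T L) {x : M} (hx : x ∈ L) :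
    ∃ g ∈ L, g * g = g ∧ g * x = x := by
  set D := L ∩ (· * x) ⁻¹' {x} with hD
  have hDsub : D ⊆ L := Set.inter_subset_left
  have hDne : D.Nonempty := by
    obtain ⟨a, haL, ha⟩ := minLI_exists_fix hρ T hT hL hx
    exact ⟨a, haL, ha⟩
  have hDcl : IsClosed D := hL.2.2.1.inter (isClosed_singleton.preimage (hρ x))
  have hDmul : ∀ a ∈ D, ∀ b ∈ D, a * b ∈ D := by
    rintro a ⟨haL, hax⟩ b ⟨hbL, hbx⟩
    refine ⟨hL.2.2.2.1 a (hL.1 haL) b hbL, ?_⟩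
    show a * b * x = x
    rw [mul_assoc]
    show a * (b * x) = x
    rw [show b * x = x from hbx]
    exact hax
  obtain ⟨g, hgD, hgg⟩ := exists_idempotent_in_compact_subsemigroup hρ D hDne
    (hT.of_isClosed_subset hDcl (hDsub.trans hL.1)) hDmul
  exact ⟨g, hgD.1, hgg, hgD.2⟩

end JdLGProof

end MinIdealAux

open JdLGProof in
/-- **Theorem 5.2 (i).**  Let `S` be a discrete semigroup, `E` a complex Banach space and `π`
a JdLG-admissible representation of `S` on `E`, with `Q` the projection onto `E_r` whose
kernel is `E_aws`.  If `p` is an idempotent ultrafilter lying in the closure of the smallest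
two-sided ideal `K(βS)`, then `π_p := p-lim_s π_s = Q` in the weak operator topology. -/
theorem idempotent_in_closure_smallest_ideal_gives_projection
    {S : Type*} [Semigroup S] [TopologicalSpace S] [DiscreteTopology S]
    {E : Type*} [NormedAddCommGroup E] [NormedSpace ℂ E] [CompleteSpace E]
    (π : S → E →L[ℂ] E) (hπ : JdLG.IsRepresentation E π)
    (hadm : JdLG.Admissible E (Set.range π))
    (Q : E →L[ℂ] E)
    (hQrev : ∀ x : E, Q x ∈ JdLG.rev E (Set.range π))
    (hQid : ∀ x ∈ JdLG.rev E (Set.range π), Q x = x)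
    (hQker : ∀ x : E, Q x = 0 ↔ x ∈ JdLG.aws E (Set.range π))
    (K : Set (Ultrafilter S)) (hK : JdLG.IsTwoSidedIdeal K)
    (hKmin : ∀ J : Set (Ultrafilter S), JdLG.IsTwoSidedIdeal J → K ⊆ J)
    (p : Ultrafilter S) (hp : p * p = p) (hpK : p ∈ closure K) :
    Tendsto (fun s => (ContinuousLinearMapWOT.ofCLM : (E →L[ℂ] E) → (E →WOT[ℂ] E)) (π s)) (p : Filter S)
      (𝓝 ((ContinuousLinearMapWOT.ofCLM : (E →L[ℂ] E) → (E →WOT[ℂ] E)) Q)) := by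
  classical
  set f : S → (E →WOT[ℂ] E) := fun s => toWOTL ℂ E E (π s) with hf_def
  set T : Set (E →WOT[ℂ] E) :=
    closure ((toWOTL ℂ E E) '' Set.range π) with hT_def
  have hT : IsCompact T := hadm.1
  have hrange : ∀ s, f s ∈ T := fun s => subset_closure ⟨π s, ⟨s, rfl⟩, rfl⟩
  have hwot : ∀ A : E →WOT[ℂ] E, A ∈ T →
      ((toWOTL ℂ E E).symm A) ∈ JdLG.wotClosure E (Set.range π) := by
    intro A hA
    show (toWOTL ℂ E E) ((toWOTL ℂ E E).symm A) ∈ T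
    rwa [LinearEquiv.apply_symm_apply]
  have hρ : ∀ r : E →WOT[ℂ] E, Continuous (· * r) := fun r => continuous_wot_mul_left r
  -- the image of `π` is multiplicatively closed
  have hfmul : ∀ s t : S, f s * f t = f (s * t) := by
    intro s t
    show (toWOTL ℂ E E (π s)) * (toWOTL ℂ E E (π t)) =
      toWOTL ℂ E E (π (s * t))
    rw [wot_mul_def, LinearEquiv.symm_apply_apply, LinearEquiv.symm_apply_apply, hπ.1 s t]
  -- T is a subsemigroup
  have step1 : ∀ b ∈ (toWOTL ℂ E E) '' Set.range π, ∀ a ∈ T, a * b ∈ T := by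
    rintro b ⟨B, ⟨t, rfl⟩, rfl⟩ a ha
    have h1 : a * (toWOTL ℂ E E (π t)) ∈
        (fun A => A * (toWOTL ℂ E E (π t))) ''
          closure ((toWOTL ℂ E E) '' Set.range π) := ⟨a, ha, rfl⟩
    have h2 := image_closure_subset_closure_image
      (continuous_wot_mul_left (toWOTL ℂ E E (π t))) h1
    refine closure_mono ?_ h2
    rintro z ⟨w, ⟨B, ⟨s, rfl⟩, rfl⟩, rfl⟩
    show f s * f t ∈ (toWOTL ℂ E E) '' Set.range π
    rw [hfmul s t]
    exact ⟨π (s * t), ⟨s * t, rfl⟩, rfl⟩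
  have hTmul : ∀ a ∈ T, ∀ b ∈ T, a * b ∈ T := by
    intro a ha b hb
    have h1 : a * b ∈ (fun B => a * B) ''
        closure ((toWOTL ℂ E E) '' Set.range π) := ⟨b, hb, rfl⟩
    have h2 := image_closure_subset_closure_image (continuous_wot_mul_right a) h1
    have h3 : (fun B => a * B) '' ((toWOTL ℂ E E) '' Set.range π) ⊆ T := by
      rintro z ⟨c, hc, rfl⟩
      exact step1 c hc a ha
    have h4 := closure_mono h3 h2
    rwa [hT.isClosed.closure_eq] at h4
  -- the canonical extension Φ : βS → T
  have hΦex : ∀ r : Ultrafilter S, ∃ A ∈ T, Tendsto f (↑r) (𝓝 A) := by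
    intro r
    have hle : ↑(r.map f) ≤ 𝓟 T := by
      rw [Filter.le_principal_iff, Ultrafilter.coe_map, Filter.mem_map]
      exact Filter.univ_mem' hrange
    obtain ⟨A, hAT, hA⟩ := hT.ultrafilter_le_nhds (r.map f) hle
    exact ⟨A, hAT, by rwa [Ultrafilter.coe_map] at hA⟩
  choose Φ hΦT hΦlim using hΦex
  -- Φ is a homomorphism
  have hΦmul : ∀ r q : Ultrafilter S, Φ (r * q) = Φ r * Φ q := by
    intro r q
    have inner : ∀ a : S, Tendsto (fun b => f (a * b)) (↑q) (𝓝 (f a * Φ q)) := by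
      intro a
      have h1 : Tendsto (fun B => f a * B) (𝓝 (Φ q)) (𝓝 (f a * Φ q)) :=
        (continuous_wot_mul_right (f a)).tendsto _
      have h2 := h1.comp (hΦlim q)
      have h3 : ((fun B => f a * B) ∘ f) = fun b => f (a * b) := by
        funext b
        simp only [Function.comp_apply, hfmul]
      rwa [h3] at h2
    have outer : Tendsto (fun a => f a * Φ q) (↑r) (𝓝 (Φ r * Φ q)) := by
      have h1 : Tendsto (fun A => A * Φ q) (𝓝 (Φ r)) (𝓝 (Φ r * Φ q)) :=
        (continuous_wot_mul_left (Φ q)).tendsto _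
      exact h1.comp (hΦlim r)
    have main : Tendsto f (↑(r * q)) (𝓝 (Φ r * Φ q)) := by
      rw [tendsto_nhds]
      intro U hUopen hUmem
      have h1 : ∀ᶠ a in (↑r : Filter S), f a * Φ q ∈ U :=
        outer.eventually (hUopen.eventually_mem hUmem)
      have h2 : ∀ᶠ m in (↑(r * q) : Filter S), f m ∈ U := by
        rw [Ultrafilter.eventually_mul]
        filter_upwards [h1] with a ha
        exact (inner a).eventually (hUopen.eventually_mem ha)
      exact h2
    exact tendsto_nhds_unique (hΦlim (r * q)) main
  -- Φ is onto T
  have hsurj : ∀ A ∈ T, ∃ r : Ultrafilter S, Φ r = A := by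
    intro A hA
    have hne : (Filter.comap f (𝓝 A)).NeBot := by
      rw [comap_neBot_iff]
      intro U hU
      obtain ⟨B, hB1, hB2⟩ := mem_closure_iff_nhds.1 hA U hU
      obtain ⟨C, ⟨s, rfl⟩, rfl⟩ := hB2
      exact ⟨s, hB1⟩
    have hr : Tendsto f (↑(Ultrafilter.of (Filter.comap f (𝓝 A)))) (𝓝 A) :=
      le_trans (Filter.map_mono (Ultrafilter.of_le _)) Filter.map_comap_le
    exact ⟨_, tendsto_nhds_unique (hΦlim _) hr⟩
  -- a minimal closed left ideal of T
  haveI : Nonempty S := Filter.nonempty_of_neBot (↑p : Filter S)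
  have hTne : T.Nonempty := ⟨f Classical.ofNonempty, hrange _⟩
  obtain ⟨L, hL⟩ := exists_isMinLI hρ T hT hTmul hTne
  -- idempotents in T behave like Q on the aws part
  have hQidem : ∀ A : E →WOT[ℂ] E, A ∈ T → A * A = A →
      ∀ ξ, Q (((toWOTL ℂ E E).symm A) ξ) = Q ξ := by
    intro A hA hAA ξ
    have hcomp : ((toWOTL ℂ E E).symm A).comp
        ((toWOTL ℂ E E).symm A) = (toWOTL ℂ E E).symm A := by
      have h1 : (toWOTL ℂ E E)
          (((toWOTL ℂ E E).symm A).comp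
            ((toWOTL ℂ E E).symm A)) =
          (toWOTL ℂ E E) ((toWOTL ℂ E E).symm A) := by
        rw [← wot_mul_def, hAA, LinearEquiv.apply_symm_apply]
      exact (toWOTL ℂ E E).injective h1
    have h0 : ((toWOTL ℂ E E).symm A)
        ((((toWOTL ℂ E E).symm A) ξ) - ξ) = 0 := by
      have h2 : ((toWOTL ℂ E E).symm A)
          (((toWOTL ℂ E E).symm A) ξ) =
          ((toWOTL ℂ E E).symm A) ξ := by
        conv_rhs => rw [← hcomp]
        rfl
      rw [map_sub, h2, sub_self]
    have haws : ((((toWOTL ℂ E E).symm A) ξ) - ξ) ∈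
        JdLG.aws E (Set.range π) := ⟨(toWOTL ℂ E E).symm A, hwot A hA, h0⟩
    have h3 : Q ((((toWOTL ℂ E E).symm A) ξ) - ξ) = 0 := (hQker _).2 haws
    rw [map_sub] at h3
    exact sub_eq_zero.1 h3
  -- every idempotent in a minimal closed left ideal equals the image of Q
  have key8 : ∀ L', IsMinLI T L' → ∀ e ∈ L', e * e = e →
      e = toWOTL ℂ E E Q := by
    intro L' hL' e heL hee
    have hrev : ∀ ξ, (((toWOTL ℂ E E).symm e) ξ) ∈
        JdLG.rev E (Set.range π) := by
      intro ξ u hu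
      have hι_u : toWOTL ℂ E E u ∈ T := hu
      obtain ⟨v, hvT, hv⟩ := minLI_idem_rev hρ T hT hTmul hL' heL hee
        (toWOTL ℂ E E u) hι_u
      refine ⟨(toWOTL ℂ E E).symm v, hwot v hvT, ?_⟩
      have h1 := congrArg (fun A : E →WOT[ℂ] E => A ξ) hv
      change v ((toWOTL ℂ E E u) (e ξ)) = e ξ at h1
      -- h1 : v (toWOT u (e (symm e ξ))) = e (symm e ξ)  (in WOT coercions)
      rw [wot_coe, wot_coe (toWOTL ℂ E E u),
        wot_coe e, LinearEquiv.symm_apply_apply] at h1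
      exact h1
    have hQA := hQidem e (hL'.1 heL) hee
    have heQ : (toWOTL ℂ E E).symm e = Q := by
      ext ξ
      have h1 := hQid _ (hrev ξ)
      rw [hQA ξ] at h1
      exact h1.symm
    rw [← heQ, LinearEquiv.apply_symm_apply]
  -- the image of Q lies in every minimal closed left ideal
  have hQmem : ∀ L', IsMinLI T L' → toWOTL ℂ E E Q ∈ L' := by
    intro L' hL'
    obtain ⟨e, heL, hee⟩ := minLI_exists_idem hρ T hT hL'
    rw [key8 L' hL' e heL hee] at heL
    exact heL
  -- the minimal closed left ideal is unique
  have hLunique : ∀ L', IsMinLI T L' → L' = L := by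
    intro L' hL'
    have h1 := minLI_eq hρ T hT hTmul hL' (hQmem L' hL')
    have h2 := minLI_eq hρ T hT hTmul hL (hQmem L hL)
    rw [← h1, h2]
  -- L is a right ideal as well
  have hLright : ∀ x ∈ L, ∀ b ∈ T, x * b ∈ L := by
    intro x hx b hb
    have hmin := minLI_mul hρ T hT hTmul hL hb
    have h1 : (· * b) '' L = L := hLunique _ hmin
    rw [← h1]
    exact ⟨x, hx, rfl⟩
  -- the preimage of L under Φ is a two-sided ideal of βS, hence contains K
  have hJ : JdLG.IsTwoSidedIdeal {r : Ultrafilter S | Φ r ∈ L} := by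
    constructor
    · obtain ⟨r, hr⟩ := hsurj (toWOTL ℂ E E Q) (hL.1 (hQmem L hL))
      exact ⟨r, by rw [Set.mem_setOf_eq, hr]; exact hQmem L hL⟩
    · intro r hr q
      constructor
      · show Φ (r * q) ∈ L
        rw [hΦmul]
        exact hLright _ hr _ (hΦT q)
      · show Φ (q * r) ∈ L
        rw [hΦmul]
        exact hL.2.2.2.1 _ (hΦT q) _ hr
  have hKJ : K ⊆ {r : Ultrafilter S | Φ r ∈ L} := hKmin _ hJ
  -- Φ p lies in L
  have hwL : Φ p ∈ L := by
    have hclosure : Φ p ∈ closure L := by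
      rw [mem_closure_iff_nhds]
      intro U hU
      obtain ⟨V, hVnhds, hVclosed, hVU⟩ := exists_mem_nhds_isClosed_subset hU
      have hA : f ⁻¹' V ∈ (↑p : Filter S) := hΦlim p hVnhds
      obtain ⟨q, hq1, hq2⟩ := _root_.mem_closure_iff.1 hpK _ (ultrafilter_isOpen_basic _) hA
      have hΦqV : Φ q ∈ V := by
        have hev : ∀ᶠ s in (↑q : Filter S), f s ∈ V := hq1
        have h1 := mem_closure_of_tendsto (hΦlim q) hev
        rwa [hVclosed.closure_eq] at h1
      exact ⟨Φ q, hVU hΦqV, hKJ hq2⟩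
    rwa [hL.2.2.1.closure_eq] at hclosure
  -- Φ p is idempotent
  have hwidem : Φ p * Φ p = Φ p := by rw [← hΦmul, hp]
  -- the image of Q is a left identity at Φ p
  obtain ⟨g, hgL, hgg, hgw⟩ := minLI_exists_idem_fix hρ T hT hTmul hL hwL
  rw [key8 L hL g hgL hgg] at hgw
  -- conclude Φ p = toWOT Q
  have hfinal : Φ p = toWOTL ℂ E E Q := by
    have h1 : ∀ ξ, ((toWOTL ℂ E E).symm (Φ p)) ξ = Q ξ := by
      intro ξ
      have h2 := congrArg (fun A : E →WOT[ℂ] E => A ξ) hgw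
      change (toWOTL ℂ E E Q) ((Φ p) ξ) = (Φ p) ξ at h2
      -- h2 : toWOT Q (Φ p ξ) = Φ p ξ  (in WOT coercions)
      rw [wot_coe (toWOTL ℂ E E Q), wot_coe (Φ p),
        LinearEquiv.symm_apply_apply] at h2
      rw [hQidem (Φ p) (hΦT p) hwidem ξ] at h2
      exact h2.symm
    have h3 : (toWOTL ℂ E E).symm (Φ p) = Q := ContinuousLinearMap.ext h1
    rw [← h3, LinearEquiv.apply_symm_apply]
  have hfin := hΦlim p
  rwa [hfinal] at hfin

end
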